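/- arXiv:1505.03220 — 3 statements merged into one kernel-verified Lean document; each statement's English description precedes it below -/
import Mathlib

section
/- For integers d ≥ 0 and 1 ≤ k ≤ d, the coefficients c_{d,k} = Σ_{i=0}^{k} (−1)^i C(d,i) S(d−i, k−i) (where S denotes Stirling numbers of the second kind and C binomial coefficients) satisfy the recursion c_{d+1,k} = d·c_{d−1,k−1} + k·c_{d,k}. -/
open Finset

/-- Stirling numbers of the second kind: `stirling2 n k` is the number of
partitions of an `n`-set into `k` nonempty blocks. -/
def stirling2 : ℕ → ℕ → ℕ
  | 0, 0 => 1
  | 0, _ + 1 => 0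
  | _ + 1, 0 => 0
  | n + 1, k + 1 => (k + 1) * stirling2 n (k + 1) + stirling2 n k

/-- The signed coefficients `c_{d,k} = ∑_{i=0}^{k} (-1)^i C(d,i) S(d-i, k-i)`
appearing in the expansion of binomial central moments. -/
noncomputable def momentCoeff (d k : ℕ) : ℝ :=
  ∑ i ∈ Finset.range (k + 1),
    (-1 : ℝ) ^ i * (d.choose i) * (stirling2 (d - i) (k - i))

/-!
Write `T d k i = (-1)^i C(d,i) S(d-i,k-i)`. Pascal's rule `C(d+1,i) = C(d,i) + C(d,i-1)` splits
`c_{d+1,k}` into two sums; the second is `-c_{d,k-1}` and cancels the `S(n,k-1)` part of the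
Stirling recurrence `S(n+1,k) = k S(n,k) + S(n,k-1)` applied to the first. What remains is
`∑ (k-i) T d k i`, and the absorption identity `i C(d,i) = d C(d-1,i-1)` turns `∑ i T d k i` into
`-d c_{d-1,k-1}`.
-/

theorem sum_range_succ_choose_mul {R : Type*} [CommSemiring R] (d n : ℕ) (f : ℕ → R) :
    ∑ i ∈ range (n + 1), ((d + 1).choose i : R) * f i =
      ∑ i ∈ range (n + 1), (d.choose i : R) * f i +
        ∑ i ∈ range n, (d.choose i : R) * f (i + 1) := by
  rw [sum_range_succ', sum_range_succ' (fun i => (d.choose i : R) * f i)]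
  simp only [Nat.choose_succ_succ, Nat.cast_add, add_mul, sum_add_distrib, Nat.choose_zero_right]
  ring

theorem add_one_mul_choose_add_one (d i : ℕ) :
    (i + 1) * d.choose (i + 1) = d * (d - 1).choose i := by
  cases d with
  | zero => simp
  | succ d => rw [Nat.add_sub_cancel, Nat.add_one_mul_choose_eq, mul_comm]

theorem stirling2_succ_succ (n k : ℕ) :
    stirling2 (n + 1) (k + 1) = (k + 1) * stirling2 n (k + 1) + stirling2 n k := rfl

/-- The factor `d.choose i` absorbs the case `d < i`, where `d - i` truncates. -/
theorem choose_mul_stirling2_sub_succ {d k i : ℕ} (hik : i ≤ k) :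
    d.choose i * stirling2 (d + 1 - i) (k + 1 - i) =
      d.choose i * ((k + 1 - i) * stirling2 (d - i) (k + 1 - i) + stirling2 (d - i) (k - i)) := by
  rcases le_or_gt i d with hid | hdi
  · rw [show d + 1 - i = d - i + 1 by omega, show k + 1 - i = k - i + 1 by omega,
      stirling2_succ_succ]
  · simp [Nat.choose_eq_zero_of_lt hdi]

theorem choose_add_one_mul_stirling2_sub_zero (d k : ℕ) :
    d.choose (k + 1) * stirling2 (d - k) 0 = 0 := by
  rcases lt_or_ge k d with hkd | hdk
  · rw [show d - k = d - k - 1 + 1 by omega, stirling2, mul_zero]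
  · rw [Nat.choose_eq_zero_of_lt (by omega), zero_mul]

theorem momentCoeff_succ_succ (d k : ℕ) :
    momentCoeff (d + 1) (k + 1) =
      ∑ i ∈ range (k + 2),
        ((k + 1 : ℝ) - i) * ((-1) ^ i * d.choose i * stirling2 (d - i) (k + 1 - i)) := by
  have pascal : momentCoeff (d + 1) (k + 1) =
      ∑ i ∈ range (k + 2), (d.choose i : ℝ) * ((-1) ^ i * stirling2 (d + 1 - i) (k + 1 - i)) -
        momentCoeff d k := by
    rw [momentCoeff, sum_congr rfl fun i _ => by rw [mul_right_comm, mul_comm],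
      sum_range_succ_choose_mul, sub_eq_add_neg, momentCoeff, ← sum_neg_distrib]
    congr 1
    refine sum_congr rfl fun i _ => ?_
    rw [Nat.add_sub_add_right, Nat.add_sub_add_right, pow_succ]
    ring
  have stirling :
      ∑ i ∈ range (k + 2), (d.choose i : ℝ) * ((-1) ^ i * stirling2 (d + 1 - i) (k + 1 - i)) =
        ∑ i ∈ range (k + 2),
          ((k + 1 : ℝ) - i) * ((-1) ^ i * d.choose i * stirling2 (d - i) (k + 1 - i)) +
        momentCoeff d k := by
    have last : (d.choose (k + 1) : ℝ) *
        ((-1) ^ (k + 1) * stirling2 (d + 1 - (k + 1)) (k + 1 - (k + 1))) = 0 := by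
      rw [mul_left_comm, Nat.add_sub_add_right, Nat.sub_self]
      exact mul_eq_zero_of_right _ (mod_cast choose_add_one_mul_stirling2_sub_zero d k)
    rw [sum_range_succ, sum_range_succ _ (k + 1), last, add_zero, Nat.cast_add_one, sub_self,
      zero_mul, add_zero, momentCoeff, ← sum_add_distrib]
    refine sum_congr rfl fun i hi => ?_
    have hik : i ≤ k := Nat.lt_succ_iff.mp (mem_range.mp hi)
    have h := congrArg (Nat.cast : ℕ → ℝ) (choose_mul_stirling2_sub_succ (d := d) hik)
    push_cast [Nat.cast_sub (Nat.le_succ_of_le hik)] at h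
    linear_combination (-1 : ℝ) ^ i * h
  rw [pascal, stirling, add_sub_cancel_right]

theorem sum_mul_momentCoeff_summand (d k : ℕ) :
    ∑ i ∈ range (k + 2), (i : ℝ) * ((-1) ^ i * d.choose i * stirling2 (d - i) (k + 1 - i)) =
      -(d * momentCoeff (d - 1) k) := by
  rw [sum_range_succ', momentCoeff, mul_sum, ← sum_neg_distrib]
  simp only [Nat.cast_zero, zero_mul, add_zero]
  refine sum_congr rfl fun i _ => ?_
  have h : ((i : ℝ) + 1) * d.choose (i + 1) = d * (d - 1).choose i := by
    exact_mod_cast add_one_mul_choose_add_one d i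
  rw [show d - (i + 1) = d - 1 - i by omega, Nat.add_sub_add_right, pow_succ]
  push_cast
  linear_combination (-(-1 : ℝ) ^ i * stirling2 (d - 1 - i) (k - i)) * h

theorem momentCoeff_rec_general (d k : ℕ) (hk : 1 ≤ k) :
    momentCoeff (d + 1) k =
      (d : ℝ) * momentCoeff (d - 1) (k - 1) + (k : ℝ) * momentCoeff d k := by
  obtain ⟨k, rfl⟩ := Nat.exists_eq_add_of_le' hk
  rw [Nat.add_sub_cancel, momentCoeff_succ_succ, momentCoeff.eq_1 d (k + 1),
    ← neg_neg ((d : ℝ) * _), ← sum_mul_momentCoeff_summand, mul_sum, ← sum_neg_distrib,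
    ← sum_add_distrib]
  push_cast
  exact sum_congr rfl fun i _ => by ring

/-- Recursion for the central-moment coefficients:
`c_{d+1,k} = d c_{d-1,k-1} + k c_{d,k}` for `1 ≤ k ≤ d`. -/
theorem momentCoeff_rec (d k : ℕ) (hk : 1 ≤ k) (hkd : k ≤ d) :
    momentCoeff (d + 1) k =
      (d : ℝ) * momentCoeff (d - 1) (k - 1) + (k : ℝ) * momentCoeff d k :=
  momentCoeff_rec_general d k hk
end

section
/- For every integer d ≥ 1 and every integer k with d/2 < k ≤ d, the coefficient c_{d,k} = Σ_{i=0}^{k} (−1)^i C(d,i) S(d−i,k−i) vanishes: c_{d,k} = 0. Equivalently, in the expansion of the d-th central moment of a binomial(n,p) random variable X as a polynomial in μ = np, E(X−μ)^d = Σ_k c_{d,k} μ^k, the highest power of μ with a nonzero coefficient does not exceed d/2. -/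
/-!
The number `c_{d,k}` counts the partitions of a `d`-element set into `k` blocks none of which is a
singleton (inclusion–exclusion over the set of singletons), so it vanishes as soon as `2k > d`.
Algebraically this is seen through the recurrence of these associated Stirling numbers,
`c_{n+2,k+1} = (k+1) c_{n+1,k+1} + (n+1) c_{n,k}` (the last element either joins one of the `k+1`
blocks of a partition of the rest, or forms a pair with one of the other `n+1` elements), which
follows from Pascal's rule, the Stirling recurrence and `i C(n+1,i) = (n+1) C(n,i-1)`. Induction on
`d` from `c_{d,d} = 0` (the alternating sum of a row of binomial coefficients) and `c_{d,k} = 0`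
for `k > d` finishes the proof.
-/

open Finset

theorem stirling2_eq_zero_of_lt : ∀ {n k : ℕ}, n < k → stirling2 n k = 0
  | 0, _ + 1, _ => rfl
  | n + 1, k + 1, h => by
    rw [stirling2, stirling2_eq_zero_of_lt (by omega), stirling2_eq_zero_of_lt (by omega),
      mul_zero]

theorem stirling2_self : ∀ n : ℕ, stirling2 n n = 1
  | 0 => rfl
  | n + 1 => by
    rw [stirling2, stirling2_self n, stirling2_eq_zero_of_lt (by omega), mul_zero, zero_add]

theorem momentCoeff_eq_zero_of_lt {d k : ℕ} (h : d < k) : momentCoeff d k = 0 := by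
  refine sum_eq_zero fun i _ => ?_
  rcases le_or_gt i d with hi | hi
  · rw [stirling2_eq_zero_of_lt (by omega), Nat.cast_zero, mul_zero]
  · rw [Nat.choose_eq_zero_of_lt hi, Nat.cast_zero, mul_zero, zero_mul]

theorem momentCoeff_self {d : ℕ} (hd : d ≠ 0) : momentCoeff d d = 0 := by
  have h := add_pow (-1 : ℝ) 1 d
  rw [neg_add_cancel, zero_pow hd] at h
  rw [h, momentCoeff]
  refine sum_congr rfl fun i _ => ?_
  rw [stirling2_self, one_pow, Nat.cast_one]
  ring

theorem momentCoeff_add_two_add_momentCoeff (n k : ℕ) :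
    momentCoeff (n + 2) (k + 1) + momentCoeff (n + 1) k =
      ∑ i ∈ range (k + 2),
        (-1 : ℝ) ^ i * ((n + 1).choose i) * (stirling2 (n + 2 - i) (k + 1 - i)) := by
  have pascal : ∀ i ∈ range (k + 1),
      (-1 : ℝ) ^ (i + 1) * ((n + 2).choose (i + 1)) *
          (stirling2 (n + 2 - (i + 1)) (k + 1 - (i + 1))) =
        (-1 : ℝ) ^ (i + 1) * ((n + 1).choose (i + 1)) *
            (stirling2 (n + 2 - (i + 1)) (k + 1 - (i + 1))) -
          (-1 : ℝ) ^ i * ((n + 1).choose i) * (stirling2 (n + 1 - i) (k - i)) := by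
    intro i _
    rw [Nat.choose_succ_succ', show n + 2 - (i + 1) = n + 1 - i by omega,
      show k + 1 - (i + 1) = k - i by omega]
    push_cast
    ring
  rw [momentCoeff, sum_range_succ', sum_congr rfl pascal, sum_sub_distrib,
    sum_range_succ' _ (k + 1)]
  simp only [momentCoeff, Nat.choose_zero_right, pow_zero]
  ring

theorem sum_choose_mul_stirling2_add_two_sub (n k : ℕ) :
    ∑ i ∈ range (k + 2),
        (-1 : ℝ) ^ i * ((n + 1).choose i) * (stirling2 (n + 2 - i) (k + 1 - i)) =
      (k + 1) * momentCoeff (n + 1) (k + 1) + momentCoeff (n + 1) k -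
        ∑ i ∈ range (k + 2),
          (-1 : ℝ) ^ i * i * ((n + 1).choose i) * (stirling2 (n + 1 - i) (k + 1 - i)) := by
  have recurrence : ∀ i ∈ range (k + 1),
      (-1 : ℝ) ^ i * ((n + 1).choose i) * (stirling2 (n + 2 - i) (k + 1 - i)) =
        (k + 1) * ((-1 : ℝ) ^ i * ((n + 1).choose i) * (stirling2 (n + 1 - i) (k + 1 - i))) +
          (-1 : ℝ) ^ i * ((n + 1).choose i) * (stirling2 (n + 1 - i) (k - i)) -
          (-1 : ℝ) ^ i * i * ((n + 1).choose i) * (stirling2 (n + 1 - i) (k + 1 - i)) := by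
    intro i hi
    have hik : i ≤ k := Nat.lt_succ_iff.mp (mem_range.mp hi)
    rcases le_or_gt i (n + 1) with hin | hin
    · rw [show n + 2 - i = n + 1 - i + 1 by omega, show k + 1 - i = k - i + 1 by omega,
        stirling2]
      push_cast [hik]
      ring
    · simp [Nat.choose_eq_zero_of_lt hin]
  have last : (n + 1).choose (k + 1) * stirling2 (n + 2 - (k + 1)) 0 = 0 := by
    rcases le_or_gt k n with hkn | hkn
    · rw [show n + 2 - (k + 1) = n - k + 1 by omega, stirling2, mul_zero]
    · rw [Nat.choose_eq_zero_of_lt (by omega), zero_mul]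
  rw [sum_range_succ, Nat.sub_self, mul_assoc, ← Nat.cast_mul, last, Nat.cast_zero, mul_zero,
    add_zero, sum_congr rfl recurrence, momentCoeff, momentCoeff, sum_range_succ _ (k + 1),
    sum_range_succ _ (k + 1)]
  simp only [mul_add, mul_sum, sum_add_distrib, sum_sub_distrib]
  push_cast
  ring

theorem sum_mul_choose_mul_stirling2 (n k : ℕ) :
    ∑ i ∈ range (k + 2),
        (-1 : ℝ) ^ i * i * ((n + 1).choose i) * (stirling2 (n + 1 - i) (k + 1 - i)) =
      -((n + 1) * momentCoeff n k) := by
  have absorb : ∀ i ∈ range (k + 1),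
      (-1 : ℝ) ^ (i + 1) * ((i + 1 : ℕ) : ℝ) * ((n + 1).choose (i + 1)) *
          (stirling2 (n + 1 - (i + 1)) (k + 1 - (i + 1))) =
        -((n + 1) * ((-1 : ℝ) ^ i * (n.choose i) * (stirling2 (n - i) (k - i)))) := by
    intro i _
    have h : ((n + 1).choose (i + 1) : ℝ) * (i + 1) = (n + 1) * n.choose i := by
      exact_mod_cast (Nat.add_one_mul_choose_eq n i).symm
    rw [show n + 1 - (i + 1) = n - i by omega, show k + 1 - (i + 1) = k - i by omega]
    push_cast
    linear_combination (-1 : ℝ) ^ (i + 1) * (stirling2 (n - i) (k - i) : ℝ) * h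
  rw [sum_range_succ', sum_congr rfl absorb, momentCoeff, mul_sum, ← sum_neg_distrib]
  simp

theorem momentCoeff_add_two (n k : ℕ) :
    momentCoeff (n + 2) (k + 1) =
      (k + 1) * momentCoeff (n + 1) (k + 1) + (n + 1) * momentCoeff n k := by
  linarith [momentCoeff_add_two_add_momentCoeff n k, sum_choose_mul_stirling2_add_two_sub n k,
    sum_mul_choose_mul_stirling2 n k]

theorem momentCoeff_eq_zero_general (d k : ℕ) (hd : 1 ≤ d) (hk : d < 2 * k) :
    momentCoeff d k = 0 := by
  induction d using Nat.strong_induction_on generalizing k with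
  | _ d ih =>
    rcases lt_trichotomy d k with hlt | rfl | hgt
    · exact momentCoeff_eq_zero_of_lt hlt
    · exact momentCoeff_self (by omega)
    · obtain ⟨n, rfl⟩ : ∃ n, d = n + 2 := ⟨d - 2, by omega⟩
      obtain ⟨j, rfl⟩ : ∃ j, k = j + 1 := ⟨k - 1, by omega⟩
      rw [momentCoeff_add_two, ih (n + 1) (by omega) (j + 1) (by omega) (by omega),
        ih n (by omega) j (by omega) (by omega)]
      ring

/-- Vanishing of the high-order coefficients: `c_{d,k} = 0` whenever
`d ≥ 1` and `d/2 < k ≤ d`; hence the highest power of `μ = np` in the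
`d`-th central binomial moment does not exceed `d/2`. -/
theorem momentCoeff_eq_zero (d k : ℕ) (hd : 1 ≤ d) (hk : d < 2 * k)
    (hkd : k ≤ d) : momentCoeff d k = 0 :=
  momentCoeff_eq_zero_general d k hd hk
end

section
/- Under the boundedness condition p_{ij} ≤ B p_i p_j for all i,j (with equal positive marginals p_i = q_i), the quantity γ² = Σ_i (p_i − p_{ii})²/p_i² + Σ_{i≠j} (p_{ij}+p_{ji})²/(4 p_i p_j) satisfies m − 2B ≤ γ² ≤ m + B². Moreover, if p_{ij} = p_i p_j (independence), then γ² = m − 1 and μ = Σ_i (1 − p_{ii}/p_i) = m − 1. -/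
/-!
Write `pᵢ` for the marginals. Each diagonal term `(pᵢ - p_{ii})² / pᵢ²` lies between
`1 - 2 p_{ii} / pᵢ ≥ 1 - 2 B pᵢ` and `1` (as `0 ≤ p_{ii} ≤ pᵢ`), and each off-diagonal
term is at most `(2 B pᵢ pⱼ)² / (4 pᵢ pⱼ) = B² pᵢ pⱼ`; summing with `∑ pᵢ = 1` gives the
two bounds. Under independence the `i`-th row of `γ²` contributes
`(1 - pᵢ)² + pᵢ (1 - pᵢ) = 1 - pᵢ`, and so does the `i`-th term of `μ`.
-/

open Finset

theorem diag_term_le_one {p a : ℝ} (hp : 0 < p) (ha : 0 ≤ a) (hap : a ≤ p) :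
    (p - a) ^ 2 / p ^ 2 ≤ 1 := by
  rw [div_le_one (by positivity)]
  nlinarith

theorem one_sub_two_mul_le_diag_term {p a B : ℝ} (hp : 0 < p) (haB : a ≤ B * p * p) :
    1 - 2 * B * p ≤ (p - a) ^ 2 / p ^ 2 := by
  rw [le_div_iff₀ (by positivity)]
  nlinarith [sq_nonneg a]

theorem offDiag_term_le {p q a b B : ℝ} (hp : 0 < p) (hq : 0 < q) (ha : 0 ≤ a) (hb : 0 ≤ b)
    (haB : a ≤ B * p * q) (hbB : b ≤ B * q * p) :
    (a + b) ^ 2 / (4 * p * q) ≤ B ^ 2 * (p * q) := by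
  have hsq : (a + b) ^ 2 ≤ (2 * B * p * q) ^ 2 :=
    pow_le_pow_left₀ (by positivity) (by linarith) 2
  rw [div_le_iff₀ (by positivity)]
  linarith

namespace BivariateDistribution

variable {ι : Type*} [Fintype ι] (P : ι → ι → ℝ)

noncomputable def marginal (i : ι) : ℝ := ∑ j, P i j

noncomputable def diagPart : ℝ := ∑ i, (marginal P i - P i i) ^ 2 / marginal P i ^ 2

noncomputable def offDiagPart [DecidableEq ι] : ℝ :=
  ∑ i, ∑ j ∈ univ.filter (· ≠ i), (P i j + P j i) ^ 2 / (4 * marginal P i * marginal P j)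

noncomputable def gammaSq [DecidableEq ι] : ℝ := diagPart P + offDiagPart P

variable {P}

theorem diag_le_marginal (hP : ∀ i j, 0 ≤ P i j) (i : ι) : P i i ≤ marginal P i :=
  single_le_sum (fun k _ => hP i k) (mem_univ i)

theorem diagPart_le_card (hP : ∀ i j, 0 ≤ P i j) (hpos : ∀ i, 0 < marginal P i) :
    diagPart P ≤ Fintype.card ι := by
  calc diagPart P ≤ ∑ _i : ι, (1 : ℝ) :=
        sum_le_sum fun i _ => diag_term_le_one (hpos i) (hP i i) (diag_le_marginal hP i)
    _ = Fintype.card ι := by simp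

theorem card_sub_two_mul_le_diagPart {B : ℝ} (hP1 : ∑ i, marginal P i = 1)
    (hpos : ∀ i, 0 < marginal P i) (hB : ∀ i j, P i j ≤ B * marginal P i * marginal P j) :
    Fintype.card ι - 2 * B ≤ diagPart P := by
  calc (Fintype.card ι : ℝ) - 2 * B = ∑ i, (1 - 2 * B * marginal P i) := by
        rw [sum_sub_distrib, ← mul_sum, hP1]; simp
    _ ≤ diagPart P := sum_le_sum fun i _ => one_sub_two_mul_le_diag_term (hpos i) (hB i i)

theorem sum_one_sub_diag_div_marginal_of_indep (hP1 : ∑ i, marginal P i = 1)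
    (hpos : ∀ i, 0 < marginal P i) (hind : ∀ i j, P i j = marginal P i * marginal P j) :
    ∑ i, (1 - P i i / marginal P i) = Fintype.card ι - 1 := by
  have hterm (i : ι) : P i i / marginal P i = marginal P i := by
    rw [hind i i, mul_div_cancel_left₀ _ (hpos i).ne']
  simp [hterm, sum_sub_distrib, hP1]

variable [DecidableEq ι]

theorem offDiagPart_nonneg (hpos : ∀ i, 0 < marginal P i) : 0 ≤ offDiagPart P :=
  sum_nonneg fun i _ => sum_nonneg fun j _ =>
    div_nonneg (sq_nonneg _) (by have := hpos i; have := hpos j; positivity)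

theorem offDiagPart_le_sq {B : ℝ} (hP : ∀ i j, 0 ≤ P i j) (hP1 : ∑ i, marginal P i = 1)
    (hpos : ∀ i, 0 < marginal P i) (hB : ∀ i j, P i j ≤ B * marginal P i * marginal P j) :
    offDiagPart P ≤ B ^ 2 := by
  have hrow (i : ι) : ∑ j ∈ univ.filter (· ≠ i),
      (P i j + P j i) ^ 2 / (4 * marginal P i * marginal P j) ≤ B ^ 2 * marginal P i :=
    calc _ ≤ ∑ j ∈ univ.filter (· ≠ i), B ^ 2 * (marginal P i * marginal P j) :=
          sum_le_sum fun j _ =>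
            offDiag_term_le (hpos i) (hpos j) (hP i j) (hP j i) (hB i j) (hB j i)
      _ ≤ ∑ j, B ^ 2 * (marginal P i * marginal P j) :=
          sum_le_sum_of_subset_of_nonneg (filter_subset _ _) fun j _ _ =>
            mul_nonneg (sq_nonneg B) (mul_nonneg (hpos i).le (hpos j).le)
      _ = B ^ 2 * marginal P i := by rw [← mul_sum, ← mul_sum, hP1, mul_one]
  calc offDiagPart P ≤ ∑ i, B ^ 2 * marginal P i := sum_le_sum fun i _ => hrow i
    _ = B ^ 2 := by rw [← mul_sum, hP1, mul_one]

theorem card_sub_two_mul_le_gammaSq {B : ℝ} (hP1 : ∑ i, marginal P i = 1)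
    (hpos : ∀ i, 0 < marginal P i) (hB : ∀ i j, P i j ≤ B * marginal P i * marginal P j) :
    Fintype.card ι - 2 * B ≤ gammaSq P := by
  linarith [card_sub_two_mul_le_diagPart hP1 hpos hB, offDiagPart_nonneg (P := P) hpos,
    show gammaSq P = diagPart P + offDiagPart P from rfl]

theorem gammaSq_le_card_add_sq {B : ℝ} (hP : ∀ i j, 0 ≤ P i j) (hP1 : ∑ i, marginal P i = 1)
    (hpos : ∀ i, 0 < marginal P i) (hB : ∀ i j, P i j ≤ B * marginal P i * marginal P j) :
    gammaSq P ≤ Fintype.card ι + B ^ 2 := by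
  linarith [diagPart_le_card hP hpos, offDiagPart_le_sq hP hP1 hpos hB,
    show gammaSq P = diagPart P + offDiagPart P from rfl]

section Independent

variable (hP1 : ∑ i, marginal P i = 1) (hpos : ∀ i, 0 < marginal P i)
  (hind : ∀ i j, P i j = marginal P i * marginal P j)
include hP1 hpos hind

theorem gammaSq_of_indep : gammaSq P = Fintype.card ι - 1 := by
  have hdiag (i : ι) :
      (marginal P i - P i i) ^ 2 / marginal P i ^ 2 = (1 - marginal P i) ^ 2 := by
    rw [hind i i, div_eq_iff (pow_pos (hpos i) 2).ne']
    ring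
  have hoff (i : ι) : ∑ j ∈ univ.filter (· ≠ i),
      (P i j + P j i) ^ 2 / (4 * marginal P i * marginal P j) =
        marginal P i * (1 - marginal P i) := by
    have hterm (j : ι) : (P i j + P j i) ^ 2 / (4 * marginal P i * marginal P j) =
        marginal P i * marginal P j := by
      have := hpos i; have := hpos j
      rw [hind i j, hind j i, div_eq_iff (by positivity)]
      ring
    simp_rw [hterm, ← mul_sum, filter_ne', sum_erase_eq_sub (mem_univ i), hP1]
  have hrow (i : ι) : (1 - marginal P i) ^ 2 + marginal P i * (1 - marginal P i) =
      1 - marginal P i := by ring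
  simp only [gammaSq, diagPart, offDiagPart, hdiag, hoff, ← sum_add_distrib, hrow,
    sum_sub_distrib, hP1]
  simp

end Independent

end BivariateDistribution

open BivariateDistribution in
/-- Bounds for the normalizing variance `γ²` of the degenerate divergence CLT:
under the boundedness condition `p_{ij} ≤ B pᵢ pⱼ` (with equal positive
marginals), `m − 2B ≤ γ² ≤ m + B²`; and under independence `p_{ij} = pᵢ pⱼ`
one has `γ² = m − 1` and `μ = ∑ᵢ (1 − p_{ii}/pᵢ) = m − 1`. -/
theorem gamma_sq_bounds (m : ℕ) (P : Fin m → Fin m → ℝ) (B : ℝ)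
    (hP : ∀ i j, 0 ≤ P i j) (hP1 : ∑ i, ∑ j, P i j = 1)
    (hmarg : ∀ i, (∑ j, P i j) = ∑ j, P j i)
    (hpos : ∀ i, 0 < ∑ j, P i j)
    (hB : ∀ i j, P i j ≤ B * (∑ k, P i k) * (∑ k, P j k)) :
    ((m : ℝ) - 2 * B ≤
        (∑ i, ((∑ j, P i j) - P i i) ^ 2 / (∑ j, P i j) ^ 2) +
          ∑ i, ∑ j ∈ Finset.univ.filter (· ≠ i),
            (P i j + P j i) ^ 2 / (4 * (∑ k, P i k) * (∑ k, P j k)) ∧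
      (∑ i, ((∑ j, P i j) - P i i) ^ 2 / (∑ j, P i j) ^ 2) +
          ∑ i, ∑ j ∈ Finset.univ.filter (· ≠ i),
            (P i j + P j i) ^ 2 / (4 * (∑ k, P i k) * (∑ k, P j k)) ≤
        (m : ℝ) + B ^ 2) ∧
      ((∀ i j, P i j = (∑ k, P i k) * (∑ k, P k j)) →
        ((∑ i, ((∑ j, P i j) - P i i) ^ 2 / (∑ j, P i j) ^ 2) +
            ∑ i, ∑ j ∈ Finset.univ.filter (· ≠ i),
              (P i j + P j i) ^ 2 / (4 * (∑ k, P i k) * (∑ k, P j k)) =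
          (m : ℝ) - 1 ∧
          (∑ i, (1 - P i i / ∑ j, P i j)) = (m : ℝ) - 1)) := by
  change ((m : ℝ) - 2 * B ≤ gammaSq P ∧ gammaSq P ≤ m + B ^ 2) ∧
    ((∀ i j, P i j = marginal P i * ∑ k, P k j) →
      gammaSq P = m - 1 ∧ ∑ i, (1 - P i i / marginal P i) = m - 1)
  have hcard : (Fintype.card (Fin m) : ℝ) = m := by rw [Fintype.card_fin]
  refine ⟨⟨hcard ▸ card_sub_two_mul_le_gammaSq hP1 hpos hB,
    hcard ▸ gammaSq_le_card_add_sq hP hP1 hpos hB⟩, fun hind => ?_⟩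
  have hind' (i j : Fin m) : P i j = marginal P i * marginal P j := by
    rw [hind i j, ← hmarg j]; rfl
  exact hcard ▸ ⟨gammaSq_of_indep hP1 hpos hind',
    sum_one_sub_diag_div_marginal_of_indep hP1 hpos hind'⟩
end
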